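/- Let p be a prime and a = (a1,a2,a3,a4,a5,a6) ∈ F_p. For every natural number k ≥ 1, a^k = (k·a1, k·a2, k·a3 + [k,a1]_p, k·a4 + [k,a2]_p, k·a5 − a1²·a2·t_k, k·a6 + a1·a2²·t_k), where t_k = Σ_{i=1}^{k−1} (i + i²) and [k,a]_p = Σ_{i=1}^{k−1} (a, i·a)_p. In particular, a^p = (0,0,a1,a2,0,0) if p ≠ 3, and a^p = (0,0,a1,a2,a1²·a2,−a1·a2²) if p = 3. -/

import Mathlib

/-- The modular overflow indicator `(a,b)_p`. -/
def ovf (p : ℕ) (a b : ZMod p) : ZMod p := if p ≤ a.val + b.val then 1 else 0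

/-- The carrier `(ℤ_p)⁶` of the loop `F_p`. -/
abbrev FpCarrier (p : ℕ) := ZMod p × ZMod p × ZMod p × ZMod p × ZMod p × ZMod p

/-- The multiplication of the loop `F_p`. -/
def fpMul (p : ℕ) : FpCarrier p → FpCarrier p → FpCarrier p
  | (a1, a2, a3, a4, a5, a6), (b1, b2, b3, b4, b5, b6) =>
    (a1 + b1, a2 + b2, a3 + b3 + ovf p a1 b1, a4 + b4 + ovf p a2 b2,
     a5 + b5 - a1 * b1 * (a2 + b2), a6 + b6 + a2 * b2 * (a1 + b1))

/-- Powers in `F_p`: `a^0 = 1`, `a^(n+1) = a·(a^n)`. -/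
def fpPow (p : ℕ) (a : FpCarrier p) : ℕ → FpCarrier p
  | 0 => (0, 0, 0, 0, 0, 0)
  | n + 1 => fpMul p a (fpPow p a n)

/-- `[k,a]_p = Σ_{i=1}^{k−1} (a, i·a)_p`. -/
def fpBracket (p : ℕ) (k : ℕ) (a : ZMod p) : ZMod p :=
  ∑ i ∈ Finset.Ico 1 k, ovf p a ((i : ZMod p) * a)

/-- `t_k = Σ_{i=1}^{k−1} (i + i²)` (in `ℤ_p`). -/
def fpT (p : ℕ) (k : ℕ) : ZMod p :=
  ∑ i ∈ Finset.Ico 1 k, ((i : ZMod p) + (i : ZMod p) ^ 2)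

/-!
Each coordinate of `a^k` satisfies a first-order recurrence in `k`, which an induction solves.
For `k = p` the overflow sum `[p,a]_p` counts the wrap-arounds modulo `p` while `a` is added to
itself `p` times, so `p·[p,a]_p = p·a`, i.e. `[p,a]_p = a`; and `3·t_k = (k-1)k(k+1)`, so
`t_p = 0` unless `p = 3`.
-/

def carryCount (p : ℕ) (a : ZMod p) (k : ℕ) : ℕ :=
  ∑ i ∈ Finset.range k, if p ≤ a.val + ((i : ZMod p) * a).val then 1 else 0

section

variable {p : ℕ} [NeZero p]

lemma val_mul_natCast_add_carryCount (a : ZMod p) (k : ℕ) :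
    ((k : ZMod p) * a).val + p * carryCount p a k = k * a.val := by
  induction k with
  | zero => simp [carryCount]
  | succ k ih =>
    have hstep : ((k + 1 : ZMod p) * a) = a + (k : ZMod p) * a := by ring
    rw [carryCount, Finset.sum_range_succ, ← carryCount, Nat.cast_succ, hstep]
    split_ifs with h
    · have := ZMod.val_add_val_of_le h
      linarith
    · have := ZMod.val_add_of_lt (not_le.mp h)
      linarith

lemma carryCount_self (a : ZMod p) : carryCount p a p = a.val := by
  have h := val_mul_natCast_add_carryCount a p
  rw [ZMod.natCast_self, zero_mul, ZMod.val_zero, zero_add] at h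
  exact Nat.eq_of_mul_eq_mul_left (NeZero.pos p) h

lemma fpBracket_eq_carryCount (k : ℕ) (a : ZMod p) : fpBracket p k a = carryCount p a k := by
  rcases Nat.eq_zero_or_pos k with rfl | hk
  · simp [fpBracket, carryCount]
  rw [fpBracket, carryCount, Finset.range_eq_Ico, Finset.sum_eq_sum_Ico_succ_bot hk]
  simp [ovf, a.val_lt]

lemma fpBracket_succ (k : ℕ) (a : ZMod p) :
    fpBracket p (k + 1) a = fpBracket p k a + ovf p a ((k : ZMod p) * a) := by
  rw [fpBracket_eq_carryCount, fpBracket_eq_carryCount, carryCount, Finset.sum_range_succ]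
  simp [carryCount, ovf]

lemma fpBracket_self (a : ZMod p) : fpBracket p p a = a := by
  rw [fpBracket_eq_carryCount, carryCount_self, ZMod.natCast_zmod_val]

end

lemma fpT_succ (p k : ℕ) : fpT p (k + 1) = fpT p k + ((k : ZMod p) + (k : ZMod p) ^ 2) := by
  rcases Nat.eq_zero_or_pos k with rfl | hk
  · simp [fpT]
  · rw [fpT, Finset.sum_Ico_succ_top hk, fpT]

lemma three_mul_fpT (p k : ℕ) : 3 * fpT p k = ((k : ZMod p) - 1) * k * (k + 1) := by
  induction k with
  | zero => simp [fpT]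
  | succ k ih =>
    rw [fpT_succ, mul_add, ih]
    push_cast
    ring

lemma fpT_self {p : ℕ} (hp : p.Prime) (hp3 : p ≠ 3) : fpT p p = 0 := by
  have : Fact p.Prime := ⟨hp⟩
  have h3 : (3 : ZMod p) ≠ 0 := by
    rw [← Nat.cast_ofNat, Ne, ZMod.natCast_eq_zero_iff, Nat.prime_dvd_prime_iff_eq hp Nat.prime_three]
    exact hp3
  have h := three_mul_fpT p p
  rw [ZMod.natCast_self, mul_zero, zero_mul] at h
  exact (mul_eq_zero.mp h).resolve_left h3

lemma fpT_three : fpT 3 3 = -1 := by decide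

lemma fpPow_eq {p : ℕ} [NeZero p] (a1 a2 a3 a4 a5 a6 : ZMod p) (k : ℕ) :
    fpPow p (a1, a2, a3, a4, a5, a6) k =
      ((k : ZMod p) * a1, (k : ZMod p) * a2,
       (k : ZMod p) * a3 + fpBracket p k a1, (k : ZMod p) * a4 + fpBracket p k a2,
       (k : ZMod p) * a5 - a1 ^ 2 * a2 * fpT p k,
       (k : ZMod p) * a6 + a1 * a2 ^ 2 * fpT p k) := by
  induction k with
  | zero => simp [fpPow, fpBracket, fpT]
  | succ k ih =>
    rw [fpPow, ih, fpMul, fpBracket_succ, fpBracket_succ, fpT_succ]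
    push_cast
    ext <;> ring

lemma fpPow_self {p : ℕ} [NeZero p] (a1 a2 a3 a4 a5 a6 : ZMod p) :
    fpPow p (a1, a2, a3, a4, a5, a6) p =
      (0, 0, a1, a2, -(a1 ^ 2 * a2 * fpT p p), a1 * a2 ^ 2 * fpT p p) := by
  simp [fpPow_eq, fpBracket_self]

theorem stmt_9_general (p : ℕ) (hp : p.Prime) (a1 a2 a3 a4 a5 a6 : ZMod p) (k : ℕ) :
    fpPow p (a1, a2, a3, a4, a5, a6) k =
      ((k : ZMod p) * a1, (k : ZMod p) * a2,
       (k : ZMod p) * a3 + fpBracket p k a1, (k : ZMod p) * a4 + fpBracket p k a2,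
       (k : ZMod p) * a5 - a1 ^ 2 * a2 * fpT p k,
       (k : ZMod p) * a6 + a1 * a2 ^ 2 * fpT p k) ∧
    (p ≠ 3 → fpPow p (a1, a2, a3, a4, a5, a6) p = (0, 0, a1, a2, 0, 0)) ∧
    (p = 3 → fpPow p (a1, a2, a3, a4, a5, a6) p =
      (0, 0, a1, a2, a1 ^ 2 * a2, -(a1 * a2 ^ 2))) := by
  have : NeZero p := ⟨hp.ne_zero⟩
  refine ⟨fpPow_eq a1 a2 a3 a4 a5 a6 k, fun hp3 => ?_, fun hp3 => ?_⟩
  · simp [fpPow_self, fpT_self hp hp3]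
  · subst hp3
    simp [fpPow_self, fpT_three]

/-- The formula for `a^k` in `F_p` (Lemma 3.4), and in particular the value of `a^p`. -/
theorem stmt_9 (p : ℕ) (hp : p.Prime) (a1 a2 a3 a4 a5 a6 : ZMod p) (k : ℕ) (hk : 1 ≤ k) :
    fpPow p (a1, a2, a3, a4, a5, a6) k =
      ((k : ZMod p) * a1, (k : ZMod p) * a2,
       (k : ZMod p) * a3 + fpBracket p k a1, (k : ZMod p) * a4 + fpBracket p k a2,
       (k : ZMod p) * a5 - a1 ^ 2 * a2 * fpT p k,
       (k : ZMod p) * a6 + a1 * a2 ^ 2 * fpT p k) ∧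
    (p ≠ 3 → fpPow p (a1, a2, a3, a4, a5, a6) p = (0, 0, a1, a2, 0, 0)) ∧
    (p = 3 → fpPow p (a1, a2, a3, a4, a5, a6) p =
      (0, 0, a1, a2, a1 ^ 2 * a2, -(a1 * a2 ^ 2))) :=
  stmt_9_general p hp a1 a2 a3 a4 a5 a6 k
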